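/- Let M = (E, G) ∈ ℰ₃ and let H be a hyperplane of G such that M|H is not a Bose–Burton geometry. Then M is a semidoubling of M|H. -/
import Mathlib


/-- A simple binary matroid `M = (E, G)`: a dimension `n` together with a ground set `E`
of nonzero vectors of `𝔽₂ⁿ` (the points of `G = 𝔽₂ⁿ \ {0}`). -/
structure BinMatroid where
  dim : ℕ
  E : Set (Fin dim → ZMod 2)
  zero_not_mem : 0 ∉ E

namespace BinMatroid

/-- `M.HasIR N` : `M` contains `N` as an induced restriction, i.e. there is an injective
linear map `φ` with `φ(E(N)) = E(M) ∩ (φ(G') \ {0})`. -/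
def HasIR (M N : BinMatroid) : Prop :=
  ∃ φ : (Fin N.dim → ZMod 2) →ₗ[ZMod 2] (Fin M.dim → ZMod 2),
    Function.Injective φ ∧ φ '' N.E = M.E ∩ (Set.range φ \ {0})

/-- Isomorphism of binary matroids: a bijective induced embedding. -/
def Iso (M N : BinMatroid) : Prop :=
  ∃ φ : (Fin N.dim → ZMod 2) →ₗ[ZMod 2] (Fin M.dim → ZMod 2),
    Function.Bijective φ ∧ φ '' N.E = M.E ∩ (Set.range φ \ {0})

/-- The critical number of the induced restriction of the ground set `E` to the flat of
the subspace `F`: the least `k` such that some flat of `F` of dimension `dim F - k`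
is disjoint from `E`. -/
noncomputable def critNumRes {n : ℕ} (E : Set (Fin n → ZMod 2))
    (F : Submodule (ZMod 2) (Fin n → ZMod 2)) : ℕ :=
  sInf {k : ℕ | ∃ W : Submodule (ZMod 2) (Fin n → ZMod 2), W ≤ F ∧
    Module.finrank (ZMod 2) W = Module.finrank (ZMod 2) F - k ∧
    Disjoint ((W : Set (Fin n → ZMod 2)) \ {0}) E}

/-- The critical number `χ(M)`: the least `k ≥ 0` such that some flat of dimension
`n - k` is disjoint from `E`. -/
noncomputable def critNum (M : BinMatroid) : ℕ :=
  sInf {k : ℕ | ∃ W : Submodule (ZMod 2) (Fin M.dim → ZMod 2),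
    Module.finrank (ZMod 2) W = M.dim - k ∧
    Disjoint ((W : Set (Fin M.dim → ZMod 2)) \ {0}) M.E}

/-- `M ∈ ℰ_k` : every induced restriction of `M` to a flat of dimension at least `k`
has even size. -/
def MemE (k : ℕ) (M : BinMatroid) : Prop :=
  ∀ W : Submodule (ZMod 2) (Fin M.dim → ZMod 2),
    k ≤ Module.finrank (ZMod 2) W →
    Even (M.E ∩ ((W : Set (Fin M.dim → ZMod 2)) \ {0})).ncard

/-- `M` is full-rank: `E` spans `𝔽₂ⁿ`. -/
def FullRank (M : BinMatroid) : Prop :=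
  Submodule.span (ZMod 2) M.E = ⊤

/-- `M` is (isomorphic to) the doubling of `M₀`: `M₀` is identified, via an injective
linear map `φ`, with the restriction of `M` to a hyperplane `H = range φ`, there is
`w ∈ G − (E ∪ H)`, and `E = (E ∩ H) ∪ (w + (E ∩ H))`. -/
def IsDoublingOf (M M₀ : BinMatroid) : Prop :=
  M.dim = M₀.dim + 1 ∧
  ∃ φ : (Fin M₀.dim → ZMod 2) →ₗ[ZMod 2] (Fin M.dim → ZMod 2),
    Function.Injective φ ∧
    ∃ w : Fin M.dim → ZMod 2, w ≠ 0 ∧ w ∉ Set.range φ ∧ w ∉ M.E ∧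
      M.E = φ '' M₀.E ∪ (fun x => w + x) '' (φ '' M₀.E)

/-- `M` arises from `M₀` by a (possibly empty) sequence of doublings. -/
def ArisesByDoublings (M M₀ : BinMatroid) : Prop :=
  ∃ M' : BinMatroid,
    Relation.ReflTransGen (fun A B => IsDoublingOf B A) M₀ M' ∧ M.Iso M'

/-- `M` is (a copy of) `AG°(t−1, 2)`, the matroid `((G − H) ∪ {x}, G)` with `H` a
hyperplane of `G` and `x ∈ H`, where `t = M.dim`. -/
def IsAGo (M : BinMatroid) : Prop :=
  ∃ H : Submodule (ZMod 2) (Fin M.dim → ZMod 2),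
    Module.finrank (ZMod 2) H + 1 = M.dim ∧
    ∃ x ∈ (H : Set (Fin M.dim → ZMod 2)) \ {0},
      M.E = ({v | v ≠ 0} \ (H : Set (Fin M.dim → ZMod 2))) ∪ {x}

/-- `M` is a Bose–Burton geometry of order `k`: `E = G − F` for a flat `F` of
dimension `n − k`. -/
def IsBoseBurton (M : BinMatroid) (k : ℕ) : Prop :=
  k ≤ M.dim ∧ ∃ W : Submodule (ZMod 2) (Fin M.dim → ZMod 2),
    Module.finrank (ZMod 2) W = M.dim - k ∧
    M.E = {v | v ≠ 0} \ (W : Set (Fin M.dim → ZMod 2))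

/-- The ground set `E` (of a matroid of the ambient dimension `n`) is the semidoubling
of its restriction to the hyperplane `H₁` with respect to the hyperplane `H₀` of `H₁`:
there is `w ∈ G − (E ∪ H₁)` with `|{x, x+w} ∩ E| ∈ {0, 2}` for every `x ∈ H₀` and
`|{x, x+w} ∩ E| = 1` for every `x ∈ H₁ − H₀`. -/
def IsSemidoublingWrt {n : ℕ} (E : Set (Fin n → ZMod 2))
    (H₁ H₀ : Submodule (ZMod 2) (Fin n → ZMod 2)) : Prop :=
  H₀ ≤ H₁ ∧ Module.finrank (ZMod 2) H₀ + 1 = Module.finrank (ZMod 2) H₁ ∧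
  ∃ w : Fin n → ZMod 2, w ≠ 0 ∧ w ∉ H₁ ∧ w ∉ E ∧
    (∀ x ∈ (H₀ : Set (Fin n → ZMod 2)) \ {0},
      (({x, x + w} : Set (Fin n → ZMod 2)) ∩ E).ncard = 0 ∨
      (({x, x + w} : Set (Fin n → ZMod 2)) ∩ E).ncard = 2) ∧
    (∀ x ∈ (H₁ : Set (Fin n → ZMod 2)) \ (H₀ : Set (Fin n → ZMod 2)),
      (({x, x + w} : Set (Fin n → ZMod 2)) ∩ E).ncard = 1)

/-- The ground set `E` is a semidoubling of its restriction to the hyperplane `H₁`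
(with respect to some hyperplane `H₀` of `H₁`). -/
def IsSemidoublingOfRes {n : ℕ} (E : Set (Fin n → ZMod 2))
    (H₁ : Submodule (ZMod 2) (Fin n → ZMod 2)) : Prop :=
  ∃ H₀ : Submodule (ZMod 2) (Fin n → ZMod 2), IsSemidoublingWrt E H₁ H₀

/-- `M` is (isomorphic to) a semidoubling of `M₀`: `M₀` is identified, via an injective
linear map `φ`, with the restriction of `M` to the hyperplane `range φ`, and `M` is a
semidoubling of that restriction. -/
def IsSemidoublingOf (M M₀ : BinMatroid) : Prop :=
  M.dim = M₀.dim + 1 ∧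
  ∃ φ : (Fin M₀.dim → ZMod 2) →ₗ[ZMod 2] (Fin M.dim → ZMod 2),
    Function.Injective φ ∧
    φ '' M₀.E = M.E ∩ (Set.range φ \ {0}) ∧
    IsSemidoublingOfRes M.E (LinearMap.range φ)

/-- `M` arises from `M₀` by a (possibly empty) sequence of semidoublings. -/
def ArisesBySemidoublings (M M₀ : BinMatroid) : Prop :=
  ∃ M' : BinMatroid,
    Relation.ReflTransGen (fun A B => IsSemidoublingOf B A) M₀ M' ∧ M.Iso M'

end BinMatroid

/-- A triangle of `G`: a set `{x, y, z}` of three distinct nonzero vectors with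
`x + y + z = 0`. -/
def IsTriangle {n : ℕ} (T : Set (Fin n → ZMod 2)) : Prop :=
  ∃ x y z : Fin n → ZMod 2, x ≠ 0 ∧ y ≠ 0 ∧ z ≠ 0 ∧
    x ≠ y ∧ x ≠ z ∧ y ≠ z ∧ x + y + z = 0 ∧ T = {x, y, z}

/-- `I₃`, the claw: the 3-dimensional matroid whose ground set is the three standard
basis vectors of `𝔽₂³`. -/
def I3 : BinMatroid where
  dim := 3
  E := Set.range fun i : Fin 3 => (Pi.single i 1 : Fin 3 → ZMod 2)
  zero_not_mem := by
    rintro ⟨i, hi⟩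
    have := congrFun hi i
    simp [Pi.single_eq_same] at this

/-- `F₇`, the Fano plane: the 3-dimensional matroid whose ground set is all of
`𝔽₂³ \ {0}`. -/
def F7 : BinMatroid where
  dim := 3
  E := {v | v ≠ 0}
  zero_not_mem := by simp

/-- `K₅`: the 4-dimensional matroid whose ground set is the set of vectors of Hamming
weight 1 or 2 in `𝔽₂⁴`. -/
def K5 : BinMatroid where
  dim := 4
  E := {v | hammingNorm v = 1 ∨ hammingNorm v = 2}
  zero_not_mem := by
    intro h
    simp only [Set.mem_setOf_eq, hammingNorm_zero] at h
    omega

open Classical in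
/-- indicator -/
noncomputable def bind2 {α : Type*} (E : Set α) (z : α) : ℕ := if z ∈ E then 1 else 0

lemma bind2_le {α : Type*} (E : Set α) (z : α) : bind2 E z ≤ 1 := by
  unfold bind2; split <;> omega

lemma bind2_pos {α : Type*} {E : Set α} {z : α} (h : z ∈ E) : bind2 E z = 1 := by
  simp [bind2, h]

lemma bind2_neg {α : Type*} {E : Set α} {z : α} (h : z ∉ E) : bind2 E z = 0 := by
  simp [bind2, h]

lemma iff_mod {α : Type*} (E : Set α) (a b : α) :
    ((a ∈ E) ↔ (b ∈ E)) ↔ (bind2 E a + bind2 E b) % 2 = 0 := by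
  by_cases h1 : a ∈ E <;> by_cases h2 : b ∈ E <;> simp [bind2, h1, h2]

lemma ncard_ins {α : Type*} [Finite α] (E s : Set α) (a : α) (ha : a ∉ s) :
    (E ∩ insert a s).ncard = bind2 E a + (E ∩ s).ncard := by
  by_cases hx : a ∈ E
  · have h2 : E ∩ insert a s = insert a (E ∩ s) := by
      ext z
      simp only [Set.mem_inter_iff, Set.mem_insert_iff]
      constructor
      · rintro ⟨hz, rfl | hz2⟩
        · exact Or.inl rfl
        · exact Or.inr ⟨hz, hz2⟩
      · rintro (rfl | ⟨hz, hz2⟩)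
        · exact ⟨hx, Or.inl rfl⟩
        · exact ⟨hz, Or.inr hz2⟩
    rw [h2, Set.ncard_insert_of_notMem (fun h => ha h.2) (Set.toFinite _), bind2_pos hx]
    omega
  · have h2 : E ∩ insert a s = E ∩ s := by
      ext z
      simp only [Set.mem_inter_iff, Set.mem_insert_iff]
      constructor
      · rintro ⟨hz, rfl | hz2⟩
        · exact absurd hz hx
        · exact ⟨hz, hz2⟩
      · rintro ⟨hz, hz2⟩; exact ⟨hz, Or.inr hz2⟩
    rw [h2, bind2_neg hx, Nat.zero_add]

lemma ncard_sing {α : Type*} (E : Set α) (a : α) :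
    (E ∩ {a}).ncard = bind2 E a := by
  by_cases hx : a ∈ E
  · have : E ∩ {a} = {a} := by
      ext z; simp only [Set.mem_inter_iff, Set.mem_singleton_iff]
      constructor
      · exact And.right
      · rintro rfl; exact ⟨hx, rfl⟩
    rw [this, Set.ncard_singleton, bind2_pos hx]
  · have : E ∩ {a} = ∅ := by
      ext z; simp only [Set.mem_inter_iff, Set.mem_singleton_iff, Set.mem_empty_iff_false, iff_false]
      rintro ⟨hz, rfl⟩; exact hx hz
    rw [this, Set.ncard_empty, bind2_neg hx]

lemma zmod2_cases (c : ZMod 2) : c = 0 ∨ c = 1 := by revert c; decide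

lemma vaddself {n : ℕ} (x : Fin n → ZMod 2) : x + x = 0 := by
  have h : ∀ a : ZMod 2, a + a = 0 := by decide
  ext i; simp only [Pi.add_apply, Pi.zero_apply]; exact h _

lemma veq_of_add_eq_zero {n : ℕ} {x y : Fin n → ZMod 2} (h : x + y = 0) : x = y := by
  have h2 : ∀ a b : ZMod 2, a + b = 0 → a = b := by decide
  ext i
  have := congrFun h i
  simp only [Pi.add_apply, Pi.zero_apply] at this
  exact h2 _ _ this

lemma vneq {n : ℕ} (a b c : Fin n → ZMod 2) (hab : a + b = c) (hc : c ≠ 0) : a ≠ b := by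
  rintro rfl
  exact hc (hab ▸ vaddself a)


set_option maxHeartbeats 1000000 in
lemma parity7 (M : BinMatroid) (hM : M.MemE 3) (H : Submodule (ZMod 2) (Fin M.dim → ZMod 2))
    (x y w : Fin M.dim → ZMod 2) (hxH : x ∈ H) (hyH : y ∈ H) (hx0 : x ≠ 0) (hy0 : y ≠ 0)
    (hxy : x ≠ y) (hwH : w ∉ H) :
    Even (bind2 M.E x + (bind2 M.E y + (bind2 M.E (x+y) + (bind2 M.E w +
      (bind2 M.E (x+w) + (bind2 M.E (y+w) + bind2 M.E (x+y+w))))))) := by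
  classical
  -- nonzeroness facts
  have hw0 : w ≠ 0 := fun h => hwH (h ▸ H.zero_mem)
  have hxy0 : x + y ≠ 0 := fun h => hxy (veq_of_add_eq_zero h)
  have hxw0 : x + w ≠ 0 := fun h => hwH (veq_of_add_eq_zero h ▸ hxH)
  have hyw0 : y + w ≠ 0 := fun h => hwH (veq_of_add_eq_zero h ▸ hyH)
  have hxyw0 : x + y + w ≠ 0 := fun h => hwH (veq_of_add_eq_zero h ▸ H.add_mem hxH hyH)
  -- algebraic identities
  have e1 : x + (x + y) = y := by
    have h : ∀ a b : ZMod 2, a + (a + b) = b := by decide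
    ext i; simp only [Pi.add_apply]; exact h _ _
  have e2 : y + (x + y) = x := by
    have h : ∀ a b : ZMod 2, b + (a + b) = a := by decide
    ext i; simp only [Pi.add_apply]; exact h _ _
  have e3 : x + (y + w) = x + y + w := by
    have h : ∀ a b c : ZMod 2, a + (b + c) = a + b + c := by decide
    ext i; simp only [Pi.add_apply]; exact h _ _ _
  have e4 : x + (x + y + w) = y + w := by
    have h : ∀ a b c : ZMod 2, a + (a + b + c) = b + c := by decide
    ext i; simp only [Pi.add_apply]; exact h _ _ _
  have e5 : y + (x + w) = x + y + w := by
    have h : ∀ a b c : ZMod 2, b + (a + c) = a + b + c := by decide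
    ext i; simp only [Pi.add_apply]; exact h _ _ _
  have e6 : y + (x + y + w) = x + w := by
    have h : ∀ a b c : ZMod 2, b + (a + b + c) = a + c := by decide
    ext i; simp only [Pi.add_apply]; exact h _ _ _
  have e7 : x + y + (x + w) = y + w := by
    have h : ∀ a b c : ZMod 2, (a + b) + (a + c) = b + c := by decide
    ext i; simp only [Pi.add_apply]; exact h _ _ _
  have e8 : x + y + (y + w) = x + w := by
    have h : ∀ a b c : ZMod 2, (a + b) + (b + c) = a + c := by decide
    ext i; simp only [Pi.add_apply]; exact h _ _ _
  have e9 : x + y + (x + y + w) = w := by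
    have h : ∀ a b c : ZMod 2, (a + b) + (a + b + c) = c := by decide
    ext i; simp only [Pi.add_apply]; exact h _ _ _
  have e10 : w + (x + w) = x := by
    have h : ∀ a c : ZMod 2, c + (a + c) = a := by decide
    ext i; simp only [Pi.add_apply]; exact h _ _
  have e11 : w + (y + w) = y := by
    have h : ∀ a c : ZMod 2, c + (a + c) = a := by decide
    ext i; simp only [Pi.add_apply]; exact h _ _
  have e12 : w + (x + y + w) = x + y := by
    have h : ∀ a b c : ZMod 2, c + (a + b + c) = a + b := by decide
    ext i; simp only [Pi.add_apply]; exact h _ _ _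
  have e13 : x + w + (y + w) = x + y := by
    have h : ∀ a b c : ZMod 2, (a + c) + (b + c) = a + b := by decide
    ext i; simp only [Pi.add_apply]; exact h _ _ _
  have e14 : x + w + (x + y + w) = y := by
    have h : ∀ a b c : ZMod 2, (a + c) + (a + b + c) = b := by decide
    ext i; simp only [Pi.add_apply]; exact h _ _ _
  have e15 : y + w + (x + y + w) = x := by
    have h : ∀ a b c : ZMod 2, (b + c) + (a + b + c) = a := by decide
    ext i; simp only [Pi.add_apply]; exact h _ _ _
  have e16 : x + (x + w) = w := by
    have h : ∀ a b : ZMod 2, a + (a + b) = b := by decide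
    ext i; simp only [Pi.add_apply]; exact h _ _
  have e17 : y + (y + w) = w := by
    have h : ∀ a b : ZMod 2, a + (a + b) = b := by decide
    ext i; simp only [Pi.add_apply]; exact h _ _
  -- linear independence
  have li : LinearIndependent (ZMod 2) ![x, y, w] := by
    rw [Fintype.linearIndependent_iff]
    intro g hg
    rw [Fin.sum_univ_three] at hg
    simp only [Matrix.cons_val_zero, Matrix.cons_val_one, Matrix.head_cons,
      Matrix.cons_val_two, Matrix.tail_cons] at hg
    have hall : g 0 = 0 ∧ g 1 = 0 ∧ g 2 = 0 := by
      rcases zmod2_cases (g 0) with h0 | h0 <;> rcases zmod2_cases (g 1) with h1 | h1 <;>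
        rcases zmod2_cases (g 2) with h2 | h2 <;>
        rw [h0, h1, h2] at hg <;>
        simp only [zero_smul, one_smul, zero_add, add_zero] at hg
      · exact ⟨h0, h1, h2⟩
      · exact absurd hg hw0
      · exact absurd hg hy0
      · exact absurd hg hyw0
      · exact absurd hg hx0
      · exact absurd hg hxw0
      · exact absurd hg hxy0
      · exact absurd hg hxyw0
    intro i
    fin_cases i
    · exact hall.1
    · exact hall.2.1
    · exact hall.2.2
  have hrange : Set.range ![x, y, w] = {x, y, w} := by
    ext z; simp only [Set.mem_range, Set.mem_insert_iff, Set.mem_singleton_iff]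
    constructor
    · rintro ⟨i, rfl⟩; fin_cases i <;> simp
    · rintro (rfl | rfl | rfl)
      exacts [⟨0, rfl⟩, ⟨1, rfl⟩, ⟨2, rfl⟩]
  set W : Submodule (ZMod 2) (Fin M.dim → ZMod 2) :=
    Submodule.span (ZMod 2) ({x, y, w} : Set (Fin M.dim → ZMod 2)) with hWdef
  have hW3 : Module.finrank (ZMod 2) W = 3 := by
    rw [hWdef, ← hrange, finrank_span_eq_card li, Fintype.card_fin]
  -- the seven points
  have hxW : x ∈ W := Submodule.subset_span (by simp)
  have hyW : y ∈ W := Submodule.subset_span (by simp)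
  have hwW : w ∈ W := Submodule.subset_span (by simp)
  have hset : (W : Set (Fin M.dim → ZMod 2)) \ {0} =
      ({x, y, x + y, w, x + w, y + w, x + y + w} : Set (Fin M.dim → ZMod 2)) := by
    ext z
    simp only [Set.mem_diff, SetLike.mem_coe, Set.mem_singleton_iff, Set.mem_insert_iff]
    constructor
    · rintro ⟨hzW, hz0⟩
      rw [hWdef, Submodule.mem_span_insert] at hzW
      obtain ⟨a, z1, hz1, rfl⟩ := hzW
      rw [Submodule.mem_span_insert] at hz1
      obtain ⟨b, z2, hz2, rfl⟩ := hz1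
      rw [Submodule.mem_span_singleton] at hz2
      obtain ⟨c, rfl⟩ := hz2
      rcases zmod2_cases a with rfl | rfl <;> rcases zmod2_cases b with rfl | rfl <;>
        rcases zmod2_cases c with rfl | rfl <;>
        simp only [zero_smul, one_smul, zero_add, add_zero] <;>
        first
          | (rw [e3]; simp; done)
          | (simp; done)
          | (simp at hz0)
    · rintro (rfl | rfl | rfl | rfl | rfl | rfl | rfl)
      · exact ⟨hxW, hx0⟩
      · exact ⟨hyW, hy0⟩
      · exact ⟨W.add_mem hxW hyW, hxy0⟩
      · exact ⟨hwW, hw0⟩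
      · exact ⟨W.add_mem hxW hwW, hxw0⟩
      · exact ⟨W.add_mem hyW hwW, hyw0⟩
      · exact ⟨W.add_mem (W.add_mem hxW hyW) hwW, hxyw0⟩
  have hEv := hM W (by rw [hW3])
  rw [hset] at hEv
  -- distinctness for the insert chain
  have d1 : x ∉ ({y, x + y, w, x + w, y + w, x + y + w} : Set (Fin M.dim → ZMod 2)) := by
    simp only [Set.mem_insert_iff, Set.mem_singleton_iff]
    push_neg
    exact ⟨hxy, vneq _ _ _ e1 hy0, vneq _ _ _ rfl hxw0, vneq _ _ _ e16 hw0,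
      vneq _ _ _ e3 hxyw0, vneq _ _ _ e4 hyw0⟩
  have d2 : y ∉ ({x + y, w, x + w, y + w, x + y + w} : Set (Fin M.dim → ZMod 2)) := by
    simp only [Set.mem_insert_iff, Set.mem_singleton_iff]
    push_neg
    exact ⟨vneq _ _ _ e2 hx0, vneq _ _ _ rfl hyw0, vneq _ _ _ e5 hxyw0,
      vneq _ _ _ e17 hw0, vneq _ _ _ e6 hxw0⟩
  have d3 : x + y ∉ ({w, x + w, y + w, x + y + w} : Set (Fin M.dim → ZMod 2)) := by
    simp only [Set.mem_insert_iff, Set.mem_singleton_iff]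
    push_neg
    exact ⟨vneq _ _ _ rfl hxyw0, vneq _ _ _ e7 hyw0, vneq _ _ _ e8 hxw0,
      vneq _ _ _ e9 hw0⟩
  have d4 : w ∉ ({x + w, y + w, x + y + w} : Set (Fin M.dim → ZMod 2)) := by
    simp only [Set.mem_insert_iff, Set.mem_singleton_iff]
    push_neg
    exact ⟨vneq _ _ _ e10 hx0, vneq _ _ _ e11 hy0, vneq _ _ _ e12 hxy0⟩
  have d5 : x + w ∉ ({y + w, x + y + w} : Set (Fin M.dim → ZMod 2)) := by
    simp only [Set.mem_insert_iff, Set.mem_singleton_iff]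
    push_neg
    exact ⟨vneq _ _ _ e13 hxy0, vneq _ _ _ e14 hy0⟩
  have d6 : y + w ∉ ({x + y + w} : Set (Fin M.dim → ZMod 2)) := by
    simp only [Set.mem_singleton_iff]
    exact vneq _ _ _ e15 hx0
  rw [show ({x, y, x + y, w, x + w, y + w, x + y + w} : Set (Fin M.dim → ZMod 2)) =
    insert x ({y, x + y, w, x + w, y + w, x + y + w} : Set (Fin M.dim → ZMod 2)) from rfl,
    ncard_ins _ _ _ d1,
    show ({y, x + y, w, x + w, y + w, x + y + w} : Set (Fin M.dim → ZMod 2)) =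
    insert y ({x + y, w, x + w, y + w, x + y + w} : Set (Fin M.dim → ZMod 2)) from rfl,
    ncard_ins _ _ _ d2,
    show ({x + y, w, x + w, y + w, x + y + w} : Set (Fin M.dim → ZMod 2)) =
    insert (x + y) ({w, x + w, y + w, x + y + w} : Set (Fin M.dim → ZMod 2)) from rfl,
    ncard_ins _ _ _ d3,
    show ({w, x + w, y + w, x + y + w} : Set (Fin M.dim → ZMod 2)) =
    insert w ({x + w, y + w, x + y + w} : Set (Fin M.dim → ZMod 2)) from rfl,
    ncard_ins _ _ _ d4,
    show ({x + w, y + w, x + y + w} : Set (Fin M.dim → ZMod 2)) =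
    insert (x + w) ({y + w, x + y + w} : Set (Fin M.dim → ZMod 2)) from rfl,
    ncard_ins _ _ _ d5,
    show ({y + w, x + y + w} : Set (Fin M.dim → ZMod 2)) =
    insert (y + w) ({x + y + w} : Set (Fin M.dim → ZMod 2)) from rfl,
    ncard_ins _ _ _ d6,
    ncard_sing] at hEv
  exact hEv

lemma Pclos (M : BinMatroid) (hM : M.MemE 3) (H : Submodule (ZMod 2) (Fin M.dim → ZMod 2))
    (w : Fin M.dim → ZMod 2) (hwH : w ∉ H) (hwE : w ∉ M.E)
    (u v : Fin M.dim → ZMod 2) (hu : u ∈ H) (hv : v ∈ H)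
    (hiff : ((u ∈ M.E) ↔ (u + w ∈ M.E)) ↔ ((v ∈ M.E) ↔ (v + w ∈ M.E))) :
    ((u + v ∈ M.E) ↔ ((u + v) + w ∈ M.E)) := by
  have hP0 : ((0 : Fin M.dim → ZMod 2) ∈ M.E) ↔ ((0 : Fin M.dim → ZMod 2) + w ∈ M.E) :=
    iff_of_false M.zero_not_mem (by rwa [zero_add])
  by_cases hu0 : u = 0
  · subst hu0; rw [zero_add]; exact hiff.mp hP0
  by_cases hv0 : v = 0
  · subst hv0; rw [add_zero]; exact hiff.mpr hP0
  by_cases huv : u = v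
  · subst huv; rw [vaddself u]; exact hP0
  have hpar := parity7 M hM H u v w hu hv hu0 hv0 huv hwH
  rw [Nat.even_iff] at hpar
  rw [iff_mod, iff_mod] at hiff
  rw [iff_mod]
  have hw' : bind2 M.E w = 0 := bind2_neg hwE
  omega

/-- If `M = (E, G) ∈ ℰ₃` and `H` is a hyperplane of `G` such that `M|H`
is not a Bose–Burton geometry, then `M` is a semidoubling of `M|H`. -/
theorem stmt9 (M : BinMatroid) (hM : M.MemE 3)
    (H : Submodule (ZMod 2) (Fin M.dim → ZMod 2))
    (hH : Module.finrank (ZMod 2) H + 1 = M.dim)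
    (hnotBB : ¬ ∃ F : Submodule (ZMod 2) (Fin M.dim → ZMod 2), F ≤ H ∧
      M.E ∩ (H : Set (Fin M.dim → ZMod 2)) =
        (H : Set (Fin M.dim → ZMod 2)) \ (F : Set (Fin M.dim → ZMod 2))) :
    BinMatroid.IsSemidoublingOfRes M.E H := by
  classical
  by_cases hC : ∃ w, w ∉ H ∧ w ∉ M.E ∧ ∃ a, a ∈ H ∧ a ≠ 0 ∧ ¬((a ∈ M.E) ↔ (a + w ∈ M.E))
  · obtain ⟨w, hwH, hwE, a, haH, ha0, haP⟩ := hC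
    have hw0 : w ≠ 0 := fun h => hwH (h ▸ H.zero_mem)
    have hP0 : ((0 : Fin M.dim → ZMod 2) ∈ M.E) ↔ ((0 : Fin M.dim → ZMod 2) + w ∈ M.E) :=
      iff_of_false M.zero_not_mem (by rwa [zero_add])
    let H₀ : Submodule (ZMod 2) (Fin M.dim → ZMod 2) :=
      { carrier := {z | z ∈ H ∧ ((z ∈ M.E) ↔ (z + w ∈ M.E))}
        zero_mem' := ⟨H.zero_mem, hP0⟩
        add_mem' := by
          rintro u v ⟨huH, huP⟩ ⟨hvH, hvP⟩
          exact ⟨H.add_mem huH hvH,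
            Pclos M hM H w hwH hwE u v huH hvH (iff_of_true huP hvP)⟩
        smul_mem' := by
          intro c u hu
          rcases zmod2_cases c with rfl | rfl
          · simp only [zero_smul]; exact ⟨H.zero_mem, hP0⟩
          · simp only [one_smul]; exact hu }
    have hmem : ∀ z, z ∈ H₀ ↔ z ∈ H ∧ ((z ∈ M.E) ↔ (z + w ∈ M.E)) := fun z => Iff.rfl
    have haH₀ : a ∉ H₀ := fun h => haP ((hmem a).mp h).2
    have hsup : H₀ ⊔ Submodule.span (ZMod 2) {a} = H := by
      apply le_antisymm
      · exact sup_le (fun z hz => ((hmem z).mp hz).1)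
          ((Submodule.span_singleton_le_iff_mem a H).mpr haH)
      · intro z hz
        by_cases hzP : ((z ∈ M.E) ↔ (z + w ∈ M.E))
        · exact Submodule.mem_sup_left ((hmem z).mpr ⟨hz, hzP⟩)
        · have hza : z + a ∈ H₀ := (hmem _).mpr ⟨H.add_mem hz haH,
            Pclos M hM H w hwH hwE z a hz haH (iff_of_false hzP haP)⟩
          have h2 : (z + a) + a = z := by
            have hzz : ∀ a b : ZMod 2, (a + b) + b = a := by decide
            ext i; simp only [Pi.add_apply]; exact hzz _ _
          rw [← h2]
          exact Submodule.add_mem _ (Submodule.mem_sup_left hza)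
            (Submodule.mem_sup_right (Submodule.mem_span_singleton_self a))
    have hinf : H₀ ⊓ Submodule.span (ZMod 2) {a} = ⊥ := by
      rw [eq_bot_iff]
      intro z hz
      rw [Submodule.mem_inf] at hz
      obtain ⟨hz1, hz2⟩ := hz
      rw [Submodule.mem_span_singleton] at hz2
      obtain ⟨c, rfl⟩ := hz2
      rcases zmod2_cases c with rfl | rfl
      · simp
      · rw [one_smul] at hz1; exact absurd hz1 haH₀
    have hrank : Module.finrank (ZMod 2) H₀ + 1 = Module.finrank (ZMod 2) H := by
      have hfin := Submodule.finrank_sup_add_finrank_inf_eq H₀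
        (Submodule.span (ZMod 2) {a})
      rw [hsup, hinf, finrank_bot, finrank_span_singleton ha0] at hfin
      omega
    have hxne : ∀ x : Fin M.dim → ZMod 2, x ≠ x + w := by
      intro x hx
      apply hw0
      have h : ∀ a b : ZMod 2, a = a + b → b = 0 := by decide
      ext i
      have := congrFun hx i
      simp only [Pi.add_apply] at this
      simp only [Pi.zero_apply]
      exact h _ _ this
    have hncard : ∀ x : Fin M.dim → ZMod 2,
        (({x, x + w} : Set (Fin M.dim → ZMod 2)) ∩ M.E).ncard =
          bind2 M.E x + bind2 M.E (x + w) := by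
      intro x
      rw [Set.inter_comm,
        show ({x, x + w} : Set (Fin M.dim → ZMod 2)) =
          insert x ({x + w} : Set (Fin M.dim → ZMod 2)) from rfl,
        ncard_ins _ _ _ (by simpa using hxne x), ncard_sing]
    refine ⟨H₀, fun z hz => ((hmem z).mp hz).1, hrank, w, hw0, hwH, hwE, ?_, ?_⟩
    · intro x hx
      have hxP := ((hmem x).mp hx.1).2
      rw [iff_mod] at hxP
      rw [hncard x]
      have b1 := bind2_le M.E x
      have b2 := bind2_le M.E (x + w)
      omega
    · intro x hx
      have hxP : ¬((x ∈ M.E) ↔ (x + w ∈ M.E)) := fun hp => hx.2 ((hmem x).mpr ⟨hx.1, hp⟩)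
      rw [iff_mod] at hxP
      rw [hncard x]
      have b1 := bind2_le M.E x
      have b2 := bind2_le M.E (x + w)
      omega
  · exfalso
    push_neg at hC
    have hwex : ∃ w₀, w₀ ∉ H := by
      by_contra hcon
      push_neg at hcon
      have htop : H = ⊤ := Submodule.eq_top_iff'.mpr hcon
      have hfr : Module.finrank (ZMod 2) (Fin M.dim → ZMod 2) = M.dim := by
        simp [Module.finrank_pi]
      rw [htop, finrank_top, hfr] at hH
      omega
    obtain ⟨w₀, hw₀⟩ := hwex
    let F : Submodule (ZMod 2) (Fin M.dim → ZMod 2) :=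
      { carrier := {z | z ∈ H ∧ z ∉ M.E}
        zero_mem' := ⟨H.zero_mem, M.zero_not_mem⟩
        add_mem' := by
          rintro u v ⟨huH, huE⟩ ⟨hvH, hvE⟩
          refine ⟨H.add_mem huH hvH, ?_⟩
          by_cases hu0 : u = 0
          · subst hu0; rwa [zero_add]
          by_cases hv0 : v = 0
          · subst hv0; rwa [add_zero]
          by_cases huv : u = v
          · subst huv; rw [vaddself u]; exact M.zero_not_mem
          by_cases hA : ∀ h ∈ H, w₀ + h ∈ M.E
          · have hpar := parity7 M hM H u v w₀ huH hvH hu0 hv0 huv hw₀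
            have i1 : bind2 M.E u = 0 := bind2_neg huE
            have i2 : bind2 M.E v = 0 := bind2_neg hvE
            have i3 : bind2 M.E w₀ = 1 := by
              have := hA 0 H.zero_mem
              rw [add_zero] at this
              exact bind2_pos this
            have i4 : bind2 M.E (u + w₀) = 1 := by
              have := hA u huH
              rw [add_comm] at this
              exact bind2_pos this
            have i5 : bind2 M.E (v + w₀) = 1 := by
              have := hA v hvH
              rw [add_comm] at this
              exact bind2_pos this
            have i6 : bind2 M.E (u + v + w₀) = 1 := by
              have := hA (u + v) (H.add_mem huH hvH)
              rw [add_comm] at this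
              exact bind2_pos this
            rw [Nat.even_iff, i1, i2, i3, i4, i5, i6] at hpar
            intro hmem'
            have hb : bind2 M.E (u + v) = 1 := bind2_pos hmem'
            omega
          · push_neg at hA
            obtain ⟨h, hhH, hhE⟩ := hA
            have hwH : w₀ + h ∉ H := fun hw => hw₀ (by
              have h2 : (w₀ + h) + h = w₀ := by
                have hzz : ∀ a b : ZMod 2, (a + b) + b = a := by decide
                ext i; simp only [Pi.add_apply]; exact hzz _ _
              rw [← h2]; exact H.add_mem hw hhH)
            have hs1 := hC (w₀ + h) hwH hhE u huH hu0
            have huwE : u + (w₀ + h) ∉ M.E := fun hh => huE (hs1.mpr hh)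
            have huwH : u + (w₀ + h) ∉ H := fun hh => hwH (by
              have h2 : u + (u + (w₀ + h)) = w₀ + h := by
                have hzz : ∀ a b : ZMod 2, a + (a + b) = b := by decide
                ext i; simp only [Pi.add_apply]; exact hzz _ _
              rw [← h2]; exact H.add_mem huH hh)
            have hs2 := hC (u + (w₀ + h)) huwH huwE v hvH hv0
            have hs3 := hC (w₀ + h) hwH hhE (u + v) (H.add_mem huH hvH)
              (fun h0 => huv (veq_of_add_eq_zero h0))
            have key : v + (u + (w₀ + h)) = (u + v) + (w₀ + h) := by
              have hzz : ∀ a b c : ZMod 2, b + (a + c) = (a + b) + c := by decide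
              ext i; simp only [Pi.add_apply]; exact hzz _ _ _
            intro hmem'
            apply hvE
            apply hs2.mpr
            rw [key]
            exact hs3.mp hmem'
        smul_mem' := by
          intro c u hu
          rcases zmod2_cases c with rfl | rfl
          · simp only [zero_smul]; exact ⟨H.zero_mem, M.zero_not_mem⟩
          · simp only [one_smul]; exact hu }
    refine hnotBB ⟨F, fun z hz => hz.1, ?_⟩
    ext z
    simp only [Set.mem_inter_iff, Set.mem_diff, SetLike.mem_coe]
    constructor
    · rintro ⟨hzE, hzH⟩
      exact ⟨hzH, fun hf => (show z ∈ H ∧ z ∉ M.E from hf).2 hzE⟩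
    · rintro ⟨hzH, hzF⟩
      refine ⟨?_, hzH⟩
      by_contra hne
      exact hzF (show z ∈ F from ⟨hzH, hne⟩)
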